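/- Core identity of Theorem 2 (equilibrium direct problem): define the uncertain cable forces f₁ = m_L·g·e₃ − (m̂·b̂₁·g/L̂)·e₃ + t·ū and f₂ = (m̂·b̂₁·g/L̂)·e₃ − t·ū, and set ξ = b₁·m_L − b̂₁·m̂·L/L̂. Then (i) f₁ + f₂ = m_L·g·e₃ (translational load balance holds exactly despite the uncertainties), and (ii) for every w ∈ ℝ³ (the actual beam axis R·e₁), b₁·(w × f₁) − b₂·(w × f₂) = w × (ξ·g·e₃ + L·t·ū). Consequently the rotational load balance b₁·(w × f₁) − b₂·(w × f₂) = 0 holds if and only if w × (ξ·g·e₃ + L·t·ū) = 0 (condition (13)). -/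

import Mathlib

/-- Cross product on `EuclideanSpace ℝ (Fin 3)`. -/
noncomputable def cross3 (a b : EuclideanSpace ℝ (Fin 3)) : EuclideanSpace ℝ (Fin 3) :=
  WithLp.toLp 2 (![a 1 * b 2 - a 2 * b 1, a 2 * b 0 - a 0 * b 2, a 0 * b 1 - a 1 * b 0] : Fin 3 → ℝ)

/-- The vertical unit vector `e₃`. -/
noncomputable def e3 : EuclideanSpace ℝ (Fin 3) := WithLp.toLp 2 (![0, 0, 1] : Fin 3 → ℝ)

/-!
The controller splits the weight so that the two cable forces sum to `m_L g e₃` whatever the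
nominal values are, which gives (i) by cancellation. Since `w × ·` is linear, the residual torque is
`w × (b₁ f₁ − b₂ f₂)`, and expanding `b₁ f₁ − b₂ f₂` with `L = b₁ + b₂` gives exactly
`ξ g e₃ + L t ū`; (ii) and the equivalence follow.
-/

open Matrix

theorem cross3_eq_crossProduct (a b : EuclideanSpace ℝ (Fin 3)) :
    cross3 a b = WithLp.toLp 2 (WithLp.ofLp a ⨯₃ WithLp.ofLp b) := by
  rw [cross_apply]
  rfl

noncomputable def cross3Left (a : EuclideanSpace ℝ (Fin 3)) :
    EuclideanSpace ℝ (Fin 3) →ₗ[ℝ] EuclideanSpace ℝ (Fin 3) :=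
  (WithLp.linearEquiv 2 ℝ (Fin 3 → ℝ)).symm.toLinearMap ∘ₗ crossProduct (WithLp.ofLp a) ∘ₗ
    (WithLp.linearEquiv 2 ℝ (Fin 3 → ℝ)).toLinearMap

@[simp]
theorem cross3Left_apply (a b : EuclideanSpace ℝ (Fin 3)) : cross3Left a b = cross3 a b := by
  rw [cross3_eq_crossProduct]
  rfl

theorem smul_cross3_sub_smul_cross3 (w a b : EuclideanSpace ℝ (Fin 3)) (r s : ℝ) :
    r • cross3 w a - s • cross3 w b = cross3 w (r • a - s • b) := by
  simp only [← cross3Left_apply, map_sub, map_smul]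

section CableForces

variable {V : Type*} [AddCommGroup V] [Module ℝ V]

theorem cableForces_add (e u : V) (m k t : ℝ) :
    (m • e - k • e + t • u) + (k • e - t • u) = m • e := by
  abel

theorem smul_cableForce_sub_smul_cableForce (e u : V) (m k t b₁ b₂ : ℝ) :
    b₁ • (m • e - k • e + t • u) - b₂ • (k • e - t • u) =
      (b₁ * m - (b₁ + b₂) * k) • e + ((b₁ + b₂) * t) • u := by
  module

end CableForces

theorem equilibrium_direct_problem_core_general
    (mL g b₁ b₂ L : ℝ)
    (hL : L = b₁ + b₂)
    (mhat b₁hat Lhat : ℝ)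
    (t : ℝ) (ubar : EuclideanSpace ℝ (Fin 3))
    (f₁ f₂ : EuclideanSpace ℝ (Fin 3)) (ξ : ℝ)
    (hf₁ : f₁ = (mL * g) • e3 - (mhat * b₁hat * g / Lhat) • e3 + t • ubar)
    (hf₂ : f₂ = (mhat * b₁hat * g / Lhat) • e3 - t • ubar)
    (hξ : ξ = b₁ * mL - b₁hat * mhat * L / Lhat) :
    f₁ + f₂ = (mL * g) • e3 ∧
    (∀ w : EuclideanSpace ℝ (Fin 3),
      b₁ • cross3 w f₁ - b₂ • cross3 w f₂ =
        cross3 w ((ξ * g) • e3 + (L * t) • ubar)) ∧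
    (∀ w : EuclideanSpace ℝ (Fin 3),
      (b₁ • cross3 w f₁ - b₂ • cross3 w f₂ = 0 ↔
        cross3 w ((ξ * g) • e3 + (L * t) • ubar) = 0)) := by
  have moment : b₁ • f₁ - b₂ • f₂ = (ξ * g) • e3 + (L * t) • ubar := by
    rw [hf₁, hf₂, smul_cableForce_sub_smul_cableForce, ← hL, hξ]
    congr 2
    ring
  have torque : ∀ w, b₁ • cross3 w f₁ - b₂ • cross3 w f₂ =
      cross3 w ((ξ * g) • e3 + (L * t) • ubar) := fun w => by
    rw [smul_cross3_sub_smul_cross3, moment]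
  exact ⟨hf₁ ▸ hf₂ ▸ cableForces_add e3 ubar _ _ t, torque, fun w => by rw [torque w]⟩

/-- core identity of Theorem 2, equilibrium direct problem: with the uncertain
cable forces `f₁, f₂` and `ξ = b₁ m_L − b̂₁ m̂ L / L̂`, translational balance holds exactly,
the residual torque is `w × (ξ g e₃ + L t ū)`, and rotational balance holds iff
`w × (ξ g e₃ + L t ū) = 0` (condition (13)). -/
theorem equilibrium_direct_problem_core
    (mL g b₁ b₂ L : ℝ) (hm : 0 < mL) (hg : 0 < g) (hb₁ : 0 < b₁) (hb₂ : 0 < b₂)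
    (hL : L = b₁ + b₂)
    (mhat b₁hat Lhat : ℝ) (hLhat : 0 < Lhat)
    (t : ℝ) (ubar : EuclideanSpace ℝ (Fin 3)) (hubar : ‖ubar‖ = 1)
    (f₁ f₂ : EuclideanSpace ℝ (Fin 3)) (ξ : ℝ)
    (hf₁ : f₁ = (mL * g) • e3 - (mhat * b₁hat * g / Lhat) • e3 + t • ubar)
    (hf₂ : f₂ = (mhat * b₁hat * g / Lhat) • e3 - t • ubar)
    (hξ : ξ = b₁ * mL - b₁hat * mhat * L / Lhat) :
    f₁ + f₂ = (mL * g) • e3 ∧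
    (∀ w : EuclideanSpace ℝ (Fin 3),
      b₁ • cross3 w f₁ - b₂ • cross3 w f₂ =
        cross3 w ((ξ * g) • e3 + (L * t) • ubar)) ∧
    (∀ w : EuclideanSpace ℝ (Fin 3),
      (b₁ • cross3 w f₁ - b₂ • cross3 w f₂ = 0 ↔
        cross3 w ((ξ * g) • e3 + (L * t) • ubar) = 0)) :=
  equilibrium_direct_problem_core_general mL g b₁ b₂ L hL mhat b₁hat Lhat t ubar f₁ f₂ ξ hf₁ hf₂ hξ
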